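/- Let $A^{(12)} = |a'\rangle\langle a|$ be a rank-one operator on $\mathcal{H}_1\otimes\mathcal{H}_2$ and $B^{(23)} = |b\rangle\langle b'|$ a rank-one operator on $\mathcal{H}_2\otimes\mathcal{H}_3$, where $|a\rangle,|a'\rangle\in\mathcal{H}_1\otimes\mathcal{H}_2$ and $|b\rangle,|b'\rangle\in\mathcal{H}_2\otimes\mathcal{H}_3$ are unit vectors. Then the operator $(A\otimes\mathbb{1}_3)(\mathbb{1}_1\otimes B)$ on $\mathcal{H}_1\otimes\mathcal{H}_2\otimes\mathcal{H}_3$ has trace norm at most $1$. -/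

import Mathlib

/-!
The operator factors through `H₂` as `C * D`, where `C : H₂ → H₁ ⊗ H₂ ⊗ H₃` has entries
`a' (x₁, x₂) b (z, x₃)` and `D : H₁ ⊗ H₂ ⊗ H₃ → H₂` has entries `conj (a (y₁, z)) conj (b' (y₂, y₃))`,
so their Hilbert–Schmidt norms are `‖a'‖ ‖b‖ = 1` and `‖a‖ ‖b'‖ = 1`.

The trace norm of a product is at most the product of the Hilbert–Schmidt norms: diagonalize
`Kᴴ K = U diag(μ) Uᴴ`; the columns of `K U` are orthogonal of lengths `√μ i`, and normalizing them
gives a partial isometry `Q` with `Qᴴ K U = diag(√μ)`. Hence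
`tr √(Kᴴ K) = tr (Qᴴ C D U) = ⟨Cᴴ Q, D U⟩ ≤ ‖Cᴴ Q‖ ‖D U‖ ≤ ‖C‖ ‖D‖`.
-/

open Matrix
open scoped ComplexOrder

/-- The positive semidefinite square root of a positive semidefinite matrix
(the definition of `Matrix.PosSemidef.sqrt` in the older Mathlib, since removed). -/
noncomputable def Matrix.PosSemidef.sqrt {n : Type*} [Fintype n] [DecidableEq n] {𝕜 : Type*}
    [RCLike 𝕜] {A : Matrix n n 𝕜} (hA : PosSemidef A) : Matrix n n 𝕜 :=
  hA.1.eigenvectorUnitary.1 * diagonal ((↑) ∘ (√·) ∘ hA.1.eigenvalues) *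
    (star hA.1.eigenvectorUnitary : Matrix n n 𝕜)

attribute [local instance] Matrix.frobeniusNormedAddCommGroup

namespace Matrix

open RCLike WithLp

variable {𝕜 : Type*} [RCLike 𝕜] {l m n : Type*} [Fintype l] [Fintype m] [Fintype n]

theorem trace_conjTranspose_mul_eq_inner (X Y : Matrix m n 𝕜) :
    (Xᴴ * Y).trace = inner 𝕜 (toLp 2 fun i => toLp 2 (X i)) (toLp 2 fun i => toLp 2 (Y i)) := by
  simp only [trace, diag, mul_apply, conjTranspose_apply, PiLp.inner_apply, RCLike.inner_apply]
  rw [Finset.sum_comm]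
  simp [mul_comm]

theorem frobenius_norm_sq_eq_re_trace (X : Matrix m n 𝕜) : ‖X‖ ^ 2 = re (Xᴴ * X).trace := by
  rw [trace_conjTranspose_mul_eq_inner, inner_self_eq_norm_sq]
  rfl

theorem frobenius_norm_sq_eq_sum (X : Matrix m n 𝕜) : ‖X‖ ^ 2 = ∑ i, ∑ j, ‖X i j‖ ^ 2 := by
  change ‖toLp 2 fun i => toLp 2 (X i)‖ ^ 2 = _
  simp [PiLp.norm_sq_eq_of_L2]

theorem re_trace_conjTranspose_mul_le (X Y : Matrix m n 𝕜) :
    re (Xᴴ * Y).trace ≤ ‖X‖ * ‖Y‖ := by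
  rw [trace_conjTranspose_mul_eq_inner]
  exact re_inner_le_norm _ _

theorem frobenius_norm_mul_unitary [DecidableEq n] (X : Matrix m n 𝕜)
    (U : unitary (Matrix n n 𝕜)) : ‖X * (U : Matrix n n 𝕜)‖ = ‖X‖ := by
  have hU : (U : Matrix n n 𝕜) * (U : Matrix n n 𝕜)ᴴ = 1 := Unitary.coe_mul_star_self U
  refine (sq_eq_sq₀ (norm_nonneg _) (norm_nonneg _)).mp ?_
  rw [frobenius_norm_sq_eq_re_trace, frobenius_norm_sq_eq_re_trace, conjTranspose_mul,
    Matrix.mul_assoc, trace_mul_comm, Matrix.mul_assoc, Matrix.mul_assoc, hU, Matrix.mul_one,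
    trace_mul_comm]

def IsPartialIsometry (Q : Matrix m n 𝕜) : Prop := Q * Qᴴ * Q = Q

theorem frobenius_norm_mul_le_of_isPartialIsometry [DecidableEq n] (X : Matrix m n 𝕜)
    {Q : Matrix n l 𝕜} (hQ : IsPartialIsometry Q) : ‖X * Q‖ ≤ ‖X‖ := by
  set P := Q * Qᴴ with hP
  have hPP : (1 - P)ᴴ * (1 - P) = 1 - P := by
    have hPP : P * P = P := by rw [hP, ← Matrix.mul_assoc, hQ]
    have hPH : Pᴴ = P := by rw [hP, conjTranspose_mul, conjTranspose_conjTranspose]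
    rw [conjTranspose_sub, conjTranspose_one, hPH, Matrix.sub_mul, Matrix.mul_sub, Matrix.mul_sub,
      hPP]
    simp
  have hXQ : ‖X * Q‖ ^ 2 = re (X * P * Xᴴ).trace := by
    rw [frobenius_norm_sq_eq_re_trace, conjTranspose_mul, trace_mul_comm, hP]
    simp only [Matrix.mul_assoc]
  have hcompl : ‖(1 - P) * Xᴴ‖ ^ 2 = re (X * (1 - P) * Xᴴ).trace := by
    rw [frobenius_norm_sq_eq_re_trace, conjTranspose_mul, conjTranspose_conjTranspose,
      Matrix.mul_assoc, ← Matrix.mul_assoc (1 - P)ᴴ, hPP, ← Matrix.mul_assoc]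
  have hX : ‖X‖ ^ 2 = re (X * Xᴴ).trace := by
    rw [frobenius_norm_sq_eq_re_trace, trace_mul_comm]
  have hsum : ‖X‖ ^ 2 = ‖X * Q‖ ^ 2 + ‖(1 - P) * Xᴴ‖ ^ 2 := by
    rw [hX, hXQ, hcompl, Matrix.mul_sub, Matrix.sub_mul, Matrix.mul_one, trace_sub, map_sub]
    ring
  refine le_of_sq_le_sq ?_ (norm_nonneg _)
  nlinarith [sq_nonneg ‖(1 - P) * Xᴴ‖]

theorem PosSemidef.trace_sqrt [DecidableEq n] {A : Matrix n n 𝕜} (hA : A.PosSemidef) :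
    hA.sqrt.trace = ∑ i, ((√(hA.1.eigenvalues i) : ℝ) : 𝕜) := by
  rw [PosSemidef.sqrt, trace_mul_cycle, Unitary.coe_star_mul_self, Matrix.one_mul, trace_diagonal]
  rfl

theorem IsHermitian.conjTranspose_mul_self_mul_eigenvectorUnitary [DecidableEq n]
    {K : Matrix m n 𝕜} (hA : (Kᴴ * K).IsHermitian) :
    (K * (hA.eigenvectorUnitary : Matrix n n 𝕜))ᴴ * (K * (hA.eigenvectorUnitary : Matrix n n 𝕜)) =
      diagonal (ofReal ∘ hA.eigenvalues) := by
  rw [← hA.conjStarAlgAut_star_eigenvectorUnitary, Unitary.conjStarAlgAut_star_apply,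
    conjTranspose_mul]
  simp only [Matrix.mul_assoc, star_eq_conjTranspose]

section Polar

/- Normalizing the orthogonal columns of `N`, of squared lengths `μ i`. Since `(0 : ℝ)⁻¹ = 0`, the
zero columns stay `0`, so no case distinction is needed. -/

variable [DecidableEq n] {N : Matrix m n 𝕜} {μ : n → ℝ}

theorem conjTranspose_mul_diagonal_inv_sqrt_mul_self (hN : Nᴴ * N = diagonal (ofReal ∘ μ)) :
    (N * diagonal fun i => (((√(μ i))⁻¹ : ℝ) : 𝕜))ᴴ * N = diagonal fun i => ((√(μ i) : ℝ) : 𝕜) := by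
  rw [conjTranspose_mul, diagonal_conjTranspose, Matrix.mul_assoc, hN, diagonal_mul_diagonal]
  congr 1
  funext i
  simp only [Pi.star_apply, RCLike.star_def, conj_ofReal, Function.comp_apply, ← ofReal_mul,
    inv_mul_eq_div, Real.div_sqrt]

theorem isPartialIsometry_mul_diagonal_inv_sqrt (hN : Nᴴ * N = diagonal (ofReal ∘ μ)) :
    IsPartialIsometry (N * diagonal fun i => (((√(μ i))⁻¹ : ℝ) : 𝕜)) := by
  set Q := N * diagonal fun i => (((√(μ i))⁻¹ : ℝ) : 𝕜)
  rw [IsPartialIsometry, Matrix.mul_assoc, ← Matrix.mul_assoc Qᴴ,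
    conjTranspose_mul_diagonal_inv_sqrt_mul_self hN, Matrix.mul_assoc, diagonal_mul_diagonal, diagonal_mul_diagonal]
  congr 2
  funext i
  rw [← ofReal_mul, ← ofReal_mul, ← mul_assoc]
  simpa using congrArg (ofReal : ℝ → 𝕜) (mul_inv_mul_cancel (√(μ i))⁻¹)

end Polar

noncomputable def traceNorm [DecidableEq n] (K : Matrix n n 𝕜) : ℝ :=
  re (posSemidef_conjTranspose_mul_self K).sqrt.trace

theorem traceNorm_mul_le [DecidableEq n] (C : Matrix n m 𝕜) (D : Matrix m n 𝕜) :
    traceNorm (C * D) ≤ ‖C‖ * ‖D‖ := by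
  set hA := (posSemidef_conjTranspose_mul_self (C * D)).1
  set U : Matrix n n 𝕜 := (hA.eigenvectorUnitary : Matrix n n 𝕜)
  set μ := hA.eigenvalues
  set Q := C * D * U * diagonal fun i => (((√(μ i))⁻¹ : ℝ) : 𝕜)
  have hN := hA.conjTranspose_mul_self_mul_eigenvectorUnitary
  calc traceNorm (C * D) = re (Qᴴ * (C * D * U)).trace := by
        rw [traceNorm, PosSemidef.trace_sqrt, conjTranspose_mul_diagonal_inv_sqrt_mul_self hN,
          trace_diagonal]
    _ = re ((Cᴴ * Q)ᴴ * (D * U)).trace := by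
        simp only [conjTranspose_mul, conjTranspose_conjTranspose, Matrix.mul_assoc]
    _ ≤ ‖Cᴴ * Q‖ * ‖D * U‖ := re_trace_conjTranspose_mul_le _ _
    _ ≤ ‖C‖ * ‖D‖ := by
        rw [frobenius_norm_mul_unitary, ← frobenius_norm_conjTranspose C]
        gcongr
        exact frobenius_norm_mul_le_of_isPartialIsometry _
          (isPartialIsometry_mul_diagonal_inv_sqrt hN)

theorem norm_toLp_eq_one_of_dotProduct_star_self {ι : Type*} [Fintype ι] {v : ι → 𝕜}
    (hv : star v ⬝ᵥ v = 1) : ‖toLp 2 v‖ = 1 := by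
  refine (pow_eq_one_iff_of_nonneg (norm_nonneg _) two_ne_zero).mp ?_
  have hre := congrArg re hv
  simp only [dotProduct, Pi.star_apply, RCLike.star_def, RCLike.conj_mul, map_sum, one_re] at hre
  simpa [PiLp.norm_sq_eq_of_L2] using hre

section TripartiteFactorization

variable {α β γ : Type*} [Fintype α] [Fintype β] [Fintype γ]

theorem frobenius_norm_of_mul (u : α × β → 𝕜) (v : β × γ → 𝕜) :
    ‖(of fun (x : α × β × γ) (z : β) => u (x.1, x.2.1) * v (z, x.2.2))‖ =
      ‖toLp 2 u‖ * ‖toLp 2 v‖ := by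
  refine (sq_eq_sq₀ (norm_nonneg _) (by positivity)).mp ?_
  rw [mul_pow, frobenius_norm_sq_eq_sum, PiLp.norm_sq_eq_of_L2, PiLp.norm_sq_eq_of_L2]
  simp only [of_apply, norm_mul, mul_pow, Fintype.sum_prod_type, ← Finset.sum_mul,
    ← Finset.mul_sum]
  rw [Finset.sum_comm (γ := β)]

theorem frobenius_norm_of_star_mul_star (u : α × β → 𝕜) (v : β × γ → 𝕜) :
    ‖(of fun (z : β) (y : α × β × γ) => star (u (y.1, z)) * star (v y.2))‖ =
      ‖toLp 2 u‖ * ‖toLp 2 v‖ := by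
  refine (sq_eq_sq₀ (norm_nonneg _) (by positivity)).mp ?_
  rw [mul_pow, frobenius_norm_sq_eq_sum, PiLp.norm_sq_eq_of_L2, PiLp.norm_sq_eq_of_L2]
  simp only [of_apply, norm_mul, norm_star, mul_pow, Fintype.sum_prod_type, ← Finset.sum_mul,
    ← Finset.mul_sum]
  rw [Finset.sum_comm (γ := β)]

theorem of_mul_of_eq_mul [DecidableEq α] [DecidableEq γ] (u u' : α × β → 𝕜) (v v' : β × γ → 𝕜) :
    (of fun x y : α × β × γ => u' (x.1, x.2.1) * star (u (y.1, y.2.1)) *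
        (if x.2.2 = y.2.2 then (1 : 𝕜) else 0)) *
      (of fun x y : α × β × γ => (if x.1 = y.1 then (1 : 𝕜) else 0) *
        v (x.2.1, x.2.2) * star (v' (y.2.1, y.2.2))) =
    (of fun (x : α × β × γ) (z : β) => u' (x.1, x.2.1) * v (z, x.2.2)) *
      (of fun (z : β) (y : α × β × γ) => star (u (y.1, z)) * star (v' y.2)) := by
  ext x y
  simp only [mul_apply, of_apply, Fintype.sum_prod_type, mul_ite, ite_mul, mul_one, mul_zero,
    zero_mul, one_mul, Finset.sum_ite_irrel, Finset.sum_const_zero, Finset.sum_ite_eq,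
    Finset.sum_ite_eq', Finset.mem_univ, if_true]
  exact Finset.sum_congr rfl fun z _ => by ring

end TripartiteFactorization

end Matrix

/-- For unit vectors `a, a' ∈ H₁⊗H₂` and `b, b' ∈ H₂⊗H₃`, the operator
`(|a'⟩⟨a| ⊗ 1₃)(1₁ ⊗ |b⟩⟨b'|)` on `H₁⊗H₂⊗H₃` has trace norm at most 1. -/
theorem stmt13 {d1 d2 d3 : ℕ}
    (a a' : Fin d1 × Fin d2 → ℂ) (b b' : Fin d2 × Fin d3 → ℂ)
    (ha : dotProduct (star a) a = 1) (ha' : dotProduct (star a') a' = 1)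
    (hb : dotProduct (star b) b = 1) (hb' : dotProduct (star b') b' = 1) :
    (((Matrix.PosSemidef.sqrt (Matrix.posSemidef_conjTranspose_mul_self
        ((Matrix.of fun x y : Fin d1 × Fin d2 × Fin d3 =>
            a' (x.1, x.2.1) * star (a (y.1, y.2.1)) *
              (if x.2.2 = y.2.2 then (1 : ℂ) else 0)) *
          (Matrix.of fun x y : Fin d1 × Fin d2 × Fin d3 =>
            (if x.1 = y.1 then (1 : ℂ) else 0) *
              b (x.2.1, x.2.2) * star (b' (y.2.1, y.2.2))))))).trace).re ≤ 1 := by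
  rw [of_mul_of_eq_mul]
  change traceNorm ((of _ : Matrix (Fin d1 × Fin d2 × Fin d3) (Fin d2) ℂ) * of _) ≤ 1
  refine (traceNorm_mul_le _ _).trans_eq ?_
  rw [frobenius_norm_of_mul, frobenius_norm_of_star_mul_star,
    norm_toLp_eq_one_of_dotProduct_star_self ha, norm_toLp_eq_one_of_dotProduct_star_self ha',
    norm_toLp_eq_one_of_dotProduct_star_self hb, norm_toLp_eq_one_of_dotProduct_star_self hb',
    one_mul, one_mul]
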